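/- Let μ be an inner node of T, φ ∈ KP(μ), and γ ∈ Λ∪{∞} with γ > μ(φ). Let ν = [μ; φ, γ] be the augmented valuation. Then: (1) ν is a valuation belonging to T, μ < ν, ν(φ) = γ, and t(μ,ν) = [φ]_μ. (2) The value group Γ_ν is the subgroup of Λ generated by Γ_{μ,φ} = {μ(a) : a ∈ K[x], 0 ≤ deg(a) < deg(φ)} together with γ. (3) If γ = ∞, then ν(f) = ∞ if and only if φ divides f in K[x]; if γ < ∞, then φ is a key polynomial for ν of minimal degree, so deg(ν) = deg(φ). -/

import Mathlib

/-!
Write `f = r + φ q` with `r = f %ₘ φ` and `q = f /ₘ φ`. The `φ`-expansion of `f` is `r` followed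
by the shifted expansion of `q`, so `ν = [μ; φ, γ]` satisfies `ν f = min (μ r) (ν q + γ)`, and
every property of `ν` is proved by induction along this recursion. On the `μ` side,
`μ`-minimality of `φ` gives `μ f = min (μ r) (μ (φ q))`, hence `μ ≤ ν`, and `μ`-irreducibility
gives `μ (a b %ₘ φ) = μ a + μ b` whenever `deg a, deg b < deg φ`.

Multiplicativity: `ν f + ν g ≤ ν (f g)` follows by peeling off one factor `φ` at a time. For the
reverse inequality, if `ν f < μ r` then `ν (r g) > ν f + ν g`, so in `f g = r g + φ (q g)` the
value is that of `φ (q g)`, which is `ν f + ν g` by induction on `deg f`; if instead `ν f = μ r` and `ν g = μ r'` then `ν (f g) ≤ μ (f g %ₘ φ) = μ (r r' %ₘ φ) = ν f + ν g`.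
The same identity makes `φ` `ν`-irreducible when `γ < ∞`.
-/

open Polynomial

namespace MLV

variable {K : Type*} [Field K] {Λ : Type*} [AddCommGroup Λ] [LinearOrder Λ] [IsOrderedAddMonoid Λ]

/-- A valuation on the field `K` with values in `Λ∞ = WithTop Λ`. -/
structure FieldVal (K : Type*) (Λ : Type*) [Field K] [AddCommGroup Λ] [LinearOrder Λ] [IsOrderedAddMonoid Λ] where
  v : K → WithTop Λ
  map_one' : v 1 = 0
  map_zero' : v 0 = ⊤
  ne_top' : ∀ a : K, a ≠ 0 → v a ≠ ⊤
  map_mul' : ∀ a b : K, v (a * b) = v a + v b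
  map_add' : ∀ a b : K, min (v a) (v b) ≤ v (a + b)

/-- `μ` is a node of the tree `T = T(Λ)`: a valuation on `K[x]` with values in `Λ∞`
whose restriction to `K` is `v`. -/
def IsValT (v : FieldVal K Λ) (μ : Polynomial K → WithTop Λ) : Prop :=
  μ 1 = 0 ∧ μ 0 = ⊤ ∧ (∀ f g : Polynomial K, μ (f * g) = μ f + μ g) ∧
    (∀ f g : Polynomial K, min (μ f) (μ g) ≤ μ (f + g)) ∧
    ∀ a : K, μ (C a) = v.v a

/-- `g ∼_μ h` : `μ(g - h) > μ(g)`. -/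
def MuEquiv (μ : Polynomial K → WithTop Λ) (g h : Polynomial K) : Prop :=
  μ g < μ (g - h)

/-- `h ∣_μ g` : `g ∼_μ f * h` for some `f`. -/
def MuDvd (μ : Polynomial K → WithTop Λ) (h g : Polynomial K) : Prop :=
  ∃ f : Polynomial K, MuEquiv μ g (f * h)

/-- `g ∈ K[x] \ K` is `μ`-minimal if it `μ`-divides no nonzero polynomial of smaller degree. -/
def IsMuMinimal (μ : Polynomial K → WithTop Λ) (g : Polynomial K) : Prop :=
  0 < g.natDegree ∧
    ∀ f : Polynomial K, f ≠ 0 → f.degree < g.degree → ¬ MuDvd μ g f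

/-- `g` is `μ`-irreducible. -/
def IsMuIrreducible (μ : Polynomial K → WithTop Λ) (g : Polynomial K) : Prop :=
  μ g ≠ ⊤ ∧ (¬ ∃ f : Polynomial K, MuEquiv μ (f * g) 1) ∧
    ∀ f h : Polynomial K, MuDvd μ g (f * h) → MuDvd μ g f ∨ MuDvd μ g h

/-- A (Maclane-Vaquié) key polynomial for `μ`. -/
def IsKeyPol (μ : Polynomial K → WithTop Λ) (φ : Polynomial K) : Prop :=
  φ.Monic ∧ IsMuMinimal μ φ ∧ IsMuIrreducible μ φ

/-- An inner node: a valuation admitting key polynomials. -/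
def IsInnerNode (μ : Polynomial K → WithTop Λ) : Prop :=
  ∃ φ : Polynomial K, IsKeyPol μ φ

/-- `deg(μ)`: the minimal degree of a key polynomial for `μ`. -/
noncomputable def degOf (μ : Polynomial K → WithTop Λ) : ℕ :=
  sInf {n : ℕ | ∃ φ : Polynomial K, IsKeyPol μ φ ∧ φ.natDegree = n}

/-- A key polynomial of minimal degree. -/
def IsMinKeyPol (μ : Polynomial K → WithTop Λ) (φ : Polynomial K) : Prop :=
  IsKeyPol μ φ ∧ ∀ ψ : Polynomial K, IsKeyPol μ ψ → φ.natDegree ≤ ψ.natDegree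

/-- the class `[φ]_μ` of key polynomials `μ`-equivalent to `φ`. -/
def KeyPolClass (μ : Polynomial K → WithTop Λ) (φ : Polynomial K) : Set (Polynomial K) :=
  {ψ : Polynomial K | IsKeyPol μ ψ ∧ MuEquiv μ ψ φ}

/-- The coefficient `a_s` of the `φ`-expansion `f = Σ_s a_s φ^s` (for `φ` monic nonconstant). -/
noncomputable def expCoeff (φ f : Polynomial K) (s : ℕ) : Polynomial K :=
  (f /ₘ φ ^ s) %ₘ φ

/-- The augmented valuation `[μ; φ, γ]`, acting on `φ`-expansions by
`ν(Σ_s a_s φ^s) = min_s (μ(a_s) + s γ)`. -/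
noncomputable def augVal (μ : Polynomial K → WithTop Λ) (φ : Polynomial K)
    (γ : WithTop Λ) (f : Polynomial K) : WithTop Λ :=
  (Finset.range (f.natDegree + 1)).inf'
    (Finset.nonempty_range_iff.mpr (Nat.succ_ne_zero _))
    fun s => μ (expCoeff φ f s) + s • γ

/-- The depth-zero valuation `ω_{a,δ}`, acting on `(x-a)`-expansions by
`ω(Σ_s a_s (x-a)^s) = min_s (v(a_s) + s δ)`. -/
noncomputable def omegaVal (v : FieldVal K Λ) (a : K) (δ : WithTop Λ)
    (f : Polynomial K) : WithTop Λ :=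
  (Finset.range (f.natDegree + 1)).inf'
    (Finset.nonempty_range_iff.mpr (Nat.succ_ne_zero _))
    fun s => v.v ((taylor a f).coeff s) + s • δ

/-- The tangent direction `t(μ,ν)`: monic polynomials of minimal degree with `μ(φ) < ν(φ)`. -/
def TangentDir (μ ν : Polynomial K → WithTop Λ) : Set (Polynomial K) :=
  {φ : Polynomial K | φ.Monic ∧ μ φ < ν φ ∧
    ∀ ψ : Polynomial K, ψ.Monic → μ ψ < ν ψ → φ.natDegree ≤ ψ.natDegree}

/-- The set of finite values of `μ`. -/
def valSet (μ : Polynomial K → WithTop Λ) : Set Λ :=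
  {γ : Λ | ∃ f : Polynomial K, μ f = (γ : WithTop Λ)}

/-- The value group `Γ_μ`. -/
def valGroup (μ : Polynomial K → WithTop Λ) : AddSubgroup Λ :=
  AddSubgroup.closure (valSet μ)

/-- `Γ = v(K^*)` as a subset of `Λ`. -/
def gammaSet (v : FieldVal K Λ) : Set Λ :=
  {γ : Λ | ∃ a : K, v.v a = (γ : WithTop Λ)}

/-- The value group `Γ` of the base field valuation. -/
def baseGroup (v : FieldVal K Λ) : AddSubgroup Λ :=
  AddSubgroup.closure (gammaSet v)

/-- `μ` is commensurable over `v` : `Γ_μ/Γ` is torsion. -/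
def IsCommensurable (v : FieldVal K Λ) (μ : Polynomial K → WithTop Λ) : Prop :=
  ∀ γ : Λ, γ ∈ valGroup μ → ∃ n : ℕ, 0 < n ∧ n • γ ∈ baseGroup v

/-- `Γ_μ^0 = {μ(a) : a ∈ K[x], 0 ≤ deg(a) < deg(μ)}`. -/
noncomputable def degZeroSet (μ : Polynomial K → WithTop Λ) : Set Λ :=
  {δ : Λ | ∃ a : Polynomial K, a ≠ 0 ∧ a.natDegree < degOf μ ∧ μ a = (δ : WithTop Λ)}

/-- Equivalence of valuations: an order-preserving isomorphism `ι : Γ_μ → Γ_ν`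
with `ν = ι ∘ μ`. -/
def ValEquiv (μ ν : Polynomial K → WithTop Λ) : Prop :=
  ∃ ι : valGroup μ ≃+ valGroup ν,
    Monotone ι ∧ (∀ f : Polynomial K, μ f = ⊤ ↔ ν f = ⊤) ∧
    ∀ (f : Polynomial K) (γ : Λ) (h : μ f = (γ : WithTop Λ)),
      ν f = ((ι ⟨γ, AddSubgroup.subset_closure ⟨f, h⟩⟩ : Λ) : WithTop Λ)

/-- `β ∼_sme γ` : an order-preserving isomorphism `⟨Γ,β⟩ → ⟨Γ,γ⟩` fixing `Γ`
and mapping `β` to `γ`. -/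
def SmeEquiv (v : FieldVal K Λ) (β γ : Λ) : Prop :=
  ∃ ι : (AddSubgroup.closure (gammaSet v ∪ {β}) : AddSubgroup Λ) ≃+
      (AddSubgroup.closure (gammaSet v ∪ {γ}) : AddSubgroup Λ),
    Monotone ι ∧
    (∀ (a : Λ) (ha : a ∈ gammaSet v),
      ((ι ⟨a, AddSubgroup.subset_closure (Set.mem_union_left _ ha)⟩ : Λ) = a)) ∧
    ((ι ⟨β, AddSubgroup.subset_closure (Set.mem_union_right _ rfl)⟩ : Λ) = γ)

section Families

variable {ι : Type*} [LinearOrder ι]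

/-- A totally ordered family of inner nodes of `T`, indexed order-isomorphically by a
totally ordered set, containing no maximal element. -/
def IsTOFamily (v : FieldVal K Λ) (ρ : ι → Polynomial K → WithTop Λ) : Prop :=
  (∀ i, IsValT v (ρ i)) ∧ (∀ i, IsInnerNode (ρ i)) ∧ StrictMono ρ ∧
    ∀ i : ι, ∃ j : ι, i < j

/-- `f` is `A`-stable: the values `ρ_i(f)` are eventually constant. -/
def IsStablePoly (ρ : ι → Polynomial K → WithTop Λ) (f : Polynomial K) : Prop :=
  ∃ i : ι, ∀ j : ι, i ≤ j → ρ j f = ρ i f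

/-- `β` is the stable value `ρ_A(f)`. -/
def IsStableVal (ρ : ι → Polynomial K → WithTop Λ) (f : Polynomial K)
    (β : WithTop Λ) : Prop :=
  ∃ i : ι, ∀ j : ι, i ≤ j → ρ j f = β

open Classical in
/-- The stability function `ρ_A` (junk value `⊤` on unstable polynomials). -/
noncomputable def stableVal (ρ : ι → Polynomial K → WithTop Λ) (f : Polynomial K) :
    WithTop Λ :=
  if h : ∃ β : WithTop Λ, IsStableVal ρ f β then h.choose else ⊤

/-- The family has stable degree `m`. -/
def HasStableDeg (ρ : ι → Polynomial K → WithTop Λ) (m : ℕ) : Prop :=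
  ∃ i : ι, ∀ j : ι, i ≤ j → degOf (ρ j) = m

/-- A continuous family: a totally ordered family of eventually constant degree. -/
def IsContFamily (v : FieldVal K Λ) (ρ : ι → Polynomial K → WithTop Λ) : Prop :=
  IsTOFamily v ρ ∧ ∃ m : ℕ, HasStableDeg ρ m

/-- The stable group `Γ_C`: stable values of nonzero stable polynomials. -/
def stableSet (ρ : ι → Polynomial K → WithTop Λ) : Set Λ :=
  {δ : Λ | ∃ f : Polynomial K, f ≠ 0 ∧ IsStableVal ρ f (δ : WithTop Λ)}

/-- A limit key polynomial: monic, unstable, of minimal degree among unstable polynomials. -/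
def IsLimKeyPol (ρ : ι → Polynomial K → WithTop Λ) (φ : Polynomial K) : Prop :=
  φ.Monic ∧ ¬ IsStablePoly ρ φ ∧
    ∀ f : Polynomial K, ¬ IsStablePoly ρ f → φ.natDegree ≤ f.natDegree

/-- An essential continuous family: `m(C) < m_∞(C) < ∞`. -/
def IsEssential (v : FieldVal K Λ) (ρ : ι → Polynomial K → WithTop Λ) : Prop :=
  IsTOFamily v ρ ∧
    ∃ m : ℕ, HasStableDeg ρ m ∧
      ∃ φ : Polynomial K, IsLimKeyPol ρ φ ∧ m < φ.natDegree

/-- The limit augmentation `[C; φ, γ]`, acting on `φ`-expansions by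
`ν(Σ_s a_s φ^s) = min_s (ρ_C(a_s) + s γ)`. -/
noncomputable def limAugVal (ρ : ι → Polynomial K → WithTop Λ) (φ : Polynomial K)
    (γ : WithTop Λ) (f : Polynomial K) : WithTop Λ :=
  (Finset.range (f.natDegree + 1)).inf'
    (Finset.nonempty_range_iff.mpr (Nat.succ_ne_zero _))
    fun s => stableVal ρ (expCoeff φ f s) + s • γ

/-- Equivalence of totally ordered families: mutual cofinality. -/
def FamEquiv {κ : Type*} [LinearOrder κ] (ρ : ι → Polynomial K → WithTop Λ)
    (σ : κ → Polynomial K → WithTop Λ) : Prop :=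
  (∀ i : ι, ∃ j : κ, ρ i ≤ σ j) ∧ ∀ j : κ, ∃ i : ι, σ j ≤ ρ i

end Families

end MLV

namespace MLV

section DivisionByMonic

variable {R : Type*} [CommRing R] {q : R[X]}

@[elab_as_elim]
theorem induction_divByMonic (hq : 0 < q.degree) {P : R[X] → Prop} (zero : P 0)
    (step : ∀ f, f ≠ 0 → P (f /ₘ q) → P f) (f : R[X]) : P f :=
  degree_lt_wf.induction f fun f ih => by
    by_cases hf : f = 0
    · exact hf ▸ zero
    · exact step f hf (ih _ (degree_divByMonic_lt f q hf hq))

theorem add_divByMonic [Nontrivial R] (hq : q.Monic) (f g : R[X]) :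
    (f + g) /ₘ q = f /ₘ q + g /ₘ q :=
  (div_modByMonic_unique _ (f %ₘ q + g %ₘ q) hq
    ⟨by linear_combination modByMonic_add_div f q + modByMonic_add_div g q,
      (degree_add_le _ _).trans_lt
        (max_lt (degree_modByMonic_lt _ hq) (degree_modByMonic_lt _ hq))⟩).1

theorem divByMonic_pow_succ [Nontrivial R] (hq : q.Monic) (f : R[X]) (s : ℕ) :
    f /ₘ q ^ (s + 1) = (f /ₘ q) /ₘ q ^ s := by
  have hq0 : q.degree ≠ ⊥ := by simp [hq.ne_zero]
  have hdeg : q.degree ≤ (q ^ s).degree + q.degree :=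
    le_add_of_nonneg_left (zero_le_degree_iff.2 (hq.pow s).ne_zero)
  refine (div_modByMonic_unique _ (f %ₘ q + q * ((f /ₘ q) %ₘ q ^ s)) (hq.pow (s + 1))
    ⟨by linear_combination modByMonic_add_div f q + q * modByMonic_add_div (f /ₘ q) (q ^ s),
      ?_⟩).1
  rw [pow_succ, hq.degree_mul, mul_comm q]
  exact (degree_add_le _ _).trans_lt (max_lt ((degree_modByMonic_lt _ hq).trans_le hdeg)
    (hq.degree_mul.trans_lt (WithBot.add_lt_add_right hq0 (degree_modByMonic_lt _ (hq.pow s)))))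

theorem degree_sub_lt_of_natDegree_eq [Nontrivial R] {p : R[X]} (hp : p.Monic) (hq : q.Monic)
    (hdeg : p.natDegree = q.natDegree) : (p - q).degree < q.degree := by
  have hdeg' : p.degree = q.degree := by
    rw [degree_eq_natDegree hp.ne_zero, degree_eq_natDegree hq.ne_zero, hdeg]
  rw [← hdeg']
  exact degree_sub_lt_left hdeg' hp.ne_zero (by rw [hp.leadingCoeff, hq.leadingCoeff])

end DivisionByMonic

variable {K : Type*} [Field K] {Λ : Type*} [AddCommGroup Λ] [LinearOrder Λ]

section Expansion

variable {φ : K[X]}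

theorem expCoeff_zero (f : K[X]) : expCoeff φ f 0 = f %ₘ φ := by
  simp [expCoeff]

theorem expCoeff_succ (hφ : φ.Monic) (f : K[X]) (s : ℕ) :
    expCoeff φ f (s + 1) = expCoeff φ (f /ₘ φ) s := by
  rw [expCoeff, expCoeff, divByMonic_pow_succ hφ]

theorem expCoeff_eq_zero_of_natDegree_lt (hφ : φ.Monic) (hd : 0 < φ.natDegree) {f : K[X]}
    {s : ℕ} (hs : f.natDegree < s) : expCoeff φ f s = 0 := by
  rw [expCoeff, (divByMonic_eq_zero_iff (hφ.pow s)).2 ?_, zero_modByMonic]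
  have hs' : s ≤ (φ ^ s).natDegree := by
    rw [hφ.natDegree_pow]
    exact Nat.le_mul_of_pos_right s hd
  exact degree_lt_degree (hs.trans_le hs')

theorem degree_expCoeff_lt (hφ : φ.Monic) (f : K[X]) (s : ℕ) :
    (expCoeff φ f s).degree < φ.degree :=
  degree_modByMonic_lt _ hφ

end Expansion

section AugVal

variable {μ : K[X] → WithTop Λ} {φ : K[X]} {γ : WithTop Λ}

theorem le_augVal {f : K[X]} {b : WithTop Λ} (hb : ∀ s, b ≤ μ (expCoeff φ f s) + s • γ) :
    b ≤ augVal μ φ γ f :=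
  Finset.le_inf' _ _ fun s _ => hb s

theorem exists_augVal_eq (f : K[X]) :
    ∃ s, augVal μ φ γ f = μ (expCoeff φ f s) + s • γ := by
  obtain ⟨s, -, hs⟩ := Finset.exists_mem_eq_inf' (Finset.nonempty_range_iff.mpr
    (Nat.succ_ne_zero f.natDegree)) fun s => μ (expCoeff φ f s) + s • γ
  exact ⟨s, hs⟩

variable [IsOrderedAddMonoid Λ] (hμ : μ 0 = ⊤)
include hμ

theorem augVal_zero : augVal μ φ γ 0 = ⊤ :=
  top_le_iff.1 (le_augVal fun s => by simp [expCoeff, hμ])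

variable (hφ : φ.Monic) (hd : 0 < φ.natDegree)
include hφ hd

theorem augVal_le (f : K[X]) (s : ℕ) : augVal μ φ γ f ≤ μ (expCoeff φ f s) + s • γ := by
  rcases le_or_gt s f.natDegree with hs | hs
  · exact Finset.inf'_le _ (Finset.mem_range.2 (Nat.lt_succ_of_le hs))
  · rw [expCoeff_eq_zero_of_natDegree_lt hφ hd hs, hμ, top_add]
    exact le_top

theorem augVal_eq_min (f : K[X]) :
    augVal μ φ γ f = min (μ (f %ₘ φ)) (augVal μ φ γ (f /ₘ φ) + γ) := by
  refine le_antisymm (le_min ?_ ?_) (le_augVal fun s => ?_)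
  · simpa [expCoeff_zero] using augVal_le hμ hφ hd (γ := γ) f 0
  · obtain ⟨s, hs⟩ := exists_augVal_eq (μ := μ) (γ := γ) (f /ₘ φ)
    calc augVal μ φ γ f ≤ μ (expCoeff φ f (s + 1)) + (s + 1) • γ :=
          augVal_le hμ hφ hd f (s + 1)
      _ = augVal μ φ γ (f /ₘ φ) + γ := by rw [hs, expCoeff_succ hφ, succ_nsmul, add_assoc]
  · cases s with
    | zero => simp [expCoeff_zero]
    | succ s =>
      rw [expCoeff_succ hφ, succ_nsmul, ← add_assoc]
      exact (min_le_right _ _).trans (add_le_add_left (augVal_le hμ hφ hd _ s) γ)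

theorem augVal_le_val_modByMonic (f : K[X]) : augVal μ φ γ f ≤ μ (f %ₘ φ) :=
  (augVal_eq_min hμ hφ hd f).trans_le (min_le_left _ _)

theorem augVal_le_augVal_divByMonic_add (f : K[X]) :
    augVal μ φ γ f ≤ augVal μ φ γ (f /ₘ φ) + γ :=
  (augVal_eq_min hμ hφ hd f).trans_le (min_le_right _ _)

theorem augVal_of_degree_lt {f : K[X]} (hf : f.degree < φ.degree) : augVal μ φ γ f = μ f := by
  rw [augVal_eq_min hμ hφ hd, (modByMonic_eq_self_iff hφ).2 hf,
    (divByMonic_eq_zero_iff hφ).2 hf, augVal_zero hμ, top_add, min_top_right]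

theorem augVal_mul_left (f : K[X]) : augVal μ φ γ (φ * f) = augVal μ φ γ f + γ := by
  rw [augVal_eq_min hμ hφ hd, mul_divByMonic_cancel_left f hφ,
    (modByMonic_eq_zero_iff_dvd hφ).2 (dvd_mul_right φ f), hμ, min_top_left]

end AugVal

variable [IsOrderedAddMonoid Λ]

section MuEquiv

variable {μ : AddValuation K[X] (WithTop Λ)} {f g h : K[X]}

theorem MuEquiv.val_eq (hfg : MuEquiv μ f g) : μ f = μ g := by
  simpa using (μ.map_sub_eq_of_lt_left hfg).symm

theorem MuEquiv.symm (hfg : MuEquiv μ f g) : MuEquiv μ g f := by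
  rw [MuEquiv, ← hfg.val_eq, μ.map_sub_swap]
  exact hfg

theorem MuDvd.of_muEquiv (hgh : MuEquiv μ g h) (hdvd : MuDvd μ g f) : MuDvd μ h f := by
  obtain ⟨w, hw⟩ := hdvd
  have hf : μ f = μ w + μ g := by rw [hw.val_eq, μ.map_mul]
  have hw_ne_top : μ w ≠ ⊤ := fun hw_top => by
    rw [hw_top, top_add] at hf
    exact LT.lt.ne_top hw hf
  have hsmall : μ f < μ (w * (g - h)) := by
    rw [hf, μ.map_mul]
    exact WithTop.add_lt_add_left hw_ne_top hgh
  refine ⟨w, ?_⟩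
  rw [MuEquiv, show f - w * h = (f - w * g) + w * (g - h) by ring]
  exact (lt_min hw hsmall).trans_le (μ.map_add _ _)

end MuEquiv

section Minimal

variable {μ : AddValuation K[X] (WithTop Λ)} {φ : K[X]}

theorem IsMuMinimal.val_add_mul (hφ : IsMuMinimal μ φ) {r : K[X]} (hr : r.degree < φ.degree)
    (q : K[X]) : μ (r + φ * q) = min (μ r) (μ (φ * q)) := by
  refine le_antisymm ?_ (μ.map_add _ _)
  by_contra! hlt
  have hr_lt : μ r < μ (r + φ * q) := by
    rcases le_or_gt (μ r) (μ (φ * q)) with hle | hgt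
    · rwa [min_eq_left hle] at hlt
    · rw [min_eq_right hgt.le, μ.map_add_eq_of_lt_right hgt] at hlt
      exact absurd hlt (lt_irrefl _)
  have hr0 : r ≠ 0 := fun hr0 => by simp [hr0] at hr_lt
  exact hφ.2 r hr0 hr ⟨-q, by rwa [MuEquiv, show r - -q * φ = r + φ * q by ring]⟩

theorem IsMuMinimal.val_eq_min (hφ : IsMuMinimal μ φ) (hm : φ.Monic) (f : K[X]) :
    μ f = min (μ (f %ₘ φ)) (μ (φ * (f /ₘ φ))) := by
  conv_lhs => rw [← modByMonic_add_div f φ]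
  exact hφ.val_add_mul (degree_modByMonic_lt f hm) _

end Minimal

section KeyPolynomial

variable {μ : AddValuation K[X] (WithTop Λ)} {φ : K[X]} (hφ : IsKeyPol μ φ)
include hφ

theorem IsKeyPol.monic : φ.Monic := hφ.1

theorem IsKeyPol.isMuMinimal : IsMuMinimal μ φ := hφ.2.1

theorem IsKeyPol.natDegree_pos : 0 < φ.natDegree := hφ.2.1.1

theorem IsKeyPol.degree_pos : 0 < φ.degree := natDegree_pos_iff_degree_pos.1 hφ.natDegree_pos

theorem IsKeyPol.not_muDvd {f : K[X]} (hf : f ≠ 0) (hdeg : f.degree < φ.degree) :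
    ¬ MuDvd μ φ f :=
  hφ.2.1.2 f hf hdeg

theorem IsKeyPol.not_muDvd_one : ¬ MuDvd μ φ 1 :=
  hφ.not_muDvd one_ne_zero (degree_one.trans_lt hφ.degree_pos)

theorem IsKeyPol.muDvd_mul {f g : K[X]} (hfg : MuDvd μ φ (f * g)) :
    MuDvd μ φ f ∨ MuDvd μ φ g :=
  hφ.2.2.2.2 f g hfg

theorem IsKeyPol.val_ne_top : μ φ ≠ ⊤ := hφ.2.2.1

theorem IsKeyPol.val_mul_modByMonic {a b : K[X]} (ha : a.degree < φ.degree)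
    (hb : b.degree < φ.degree) : μ ((a * b) %ₘ φ) = μ a + μ b := by
  have hsplit := modByMonic_add_div (a * b) φ
  have hval := hφ.isMuMinimal.val_eq_min hφ.monic (a * b)
  rw [← μ.map_mul]
  refine le_antisymm ?_ (hval ▸ min_le_left _ _)
  by_contra! hlt
  have ha0 : a ≠ 0 := fun h0 => by simp [h0] at hlt
  have hb0 : b ≠ 0 := fun h0 => by simp [h0] at hlt
  have hdvd : MuDvd μ φ (a * b) :=
    ⟨(a * b) /ₘ φ, by
      rwa [MuEquiv,
        show a * b - (a * b) /ₘ φ * φ = (a * b) %ₘ φ by linear_combination -hsplit]⟩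
  rcases hφ.muDvd_mul hdvd with hdvd | hdvd
  · exact hφ.not_muDvd ha0 ha hdvd
  · exact hφ.not_muDvd hb0 hb hdvd

theorem IsKeyPol.irreducible : Irreducible φ := by
  refine ⟨fun hu => (natDegree_eq_zero_of_isUnit hu ▸ hφ.natDegree_pos).false,
    fun a b hab => ?_⟩
  by_contra! hab_units
  have ha0 : a ≠ 0 := by rintro rfl; simp [hφ.monic.ne_zero] at hab
  have hb0 : b ≠ 0 := by rintro rfl; simp [hφ.monic.ne_zero] at hab
  have hna := natDegree_pos_iff_degree_pos.2 (degree_pos_of_ne_zero_of_nonunit ha0 hab_units.1)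
  have hnb := natDegree_pos_iff_degree_pos.2 (degree_pos_of_ne_zero_of_nonunit hb0 hab_units.2)
  have hsum : φ.natDegree = a.natDegree + b.natDegree := by rw [hab, natDegree_mul ha0 hb0]
  have hdvd : MuDvd μ φ (a * b) :=
    ⟨1, by rw [MuEquiv, one_mul, ← hab, sub_self, μ.map_zero]; exact hφ.val_ne_top.lt_top⟩
  rcases hφ.muDvd_mul hdvd with hdvd | hdvd
  · exact hφ.not_muDvd ha0 (degree_lt_degree (by omega)) hdvd
  · exact hφ.not_muDvd hb0 (degree_lt_degree (by omega)) hdvd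

theorem IsKeyPol.val_ne_top_of_ne_zero {f : K[X]} (hf : f ≠ 0) : μ f ≠ ⊤ := by
  induction f using induction_divByMonic hφ.degree_pos with
  | zero => exact (hf rfl).elim
  | step f hf ih =>
    intro htop
    by_cases hdvd : φ ∣ f
    · have hfac : f = φ * (f /ₘ φ) := by
        simpa [(modByMonic_eq_zero_iff_dvd hφ.monic).2 hdvd] using (modByMonic_add_div f φ).symm
      have hq0 : f /ₘ φ ≠ 0 := fun h0 => hf (by rw [hfac, h0, mul_zero])
      rw [hfac, μ.map_mul, WithTop.add_eq_top] at htop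
      exact htop.elim hφ.val_ne_top (ih hq0)
    · -- `u φ + w f = 1` would make `φ` `μ`-divide `1`
      obtain ⟨u, w, huw⟩ := (hφ.irreducible.coprime_iff_not_dvd).2 hdvd
      refine hφ.not_muDvd_one ⟨u, ?_⟩
      rw [MuEquiv, show 1 - u * φ = w * f by linear_combination -huw, μ.map_mul, htop, add_top,
        μ.map_one]
      exact WithTop.coe_lt_top 0

theorem IsKeyPol.of_muEquiv {ψ : K[X]} (hψ : ψ.Monic) (hdeg : ψ.natDegree = φ.natDegree)
    (hψφ : MuEquiv μ ψ φ) : IsKeyPol μ ψ := by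
  have hdeg' : ψ.degree = φ.degree := by
    rw [degree_eq_natDegree hψ.ne_zero, degree_eq_natDegree hφ.monic.ne_zero, hdeg]
  refine ⟨hψ, ⟨hdeg ▸ hφ.natDegree_pos, fun f hf hfψ hdvd => ?_⟩,
    hψφ.val_eq ▸ hφ.val_ne_top,
    fun ⟨f, hf⟩ => ?_, fun f g hfg => ?_⟩
  · exact hφ.not_muDvd hf (hdeg' ▸ hfψ) (hdvd.of_muEquiv hψφ)
  · exact hφ.not_muDvd_one (MuDvd.of_muEquiv hψφ ⟨f, hf.symm⟩)
  · exact (hφ.muDvd_mul (hfg.of_muEquiv hψφ)).imp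
      (·.of_muEquiv hψφ.symm) (·.of_muEquiv hψφ.symm)

end KeyPolynomial

section Augmentation

variable {μ : AddValuation K[X] (WithTop Λ)} {φ : K[X]} {γ : WithTop Λ}

theorem augVal_add (hφ : φ.Monic) (hd : 0 < φ.natDegree) (f g : K[X]) :
    min (augVal μ φ γ f) (augVal μ φ γ g) ≤ augVal μ φ γ (f + g) := by
  induction f using induction_divByMonic (natDegree_pos_iff_degree_pos.1 hd) generalizing g with
  | zero => simp [augVal_zero μ.map_zero]
  | step f _ ih =>
    rw [augVal_eq_min μ.map_zero hφ hd (f + g), add_modByMonic, add_divByMonic hφ]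
    refine le_min ?_ ?_
    · exact (min_le_min (augVal_le_val_modByMonic μ.map_zero hφ hd f)
        (augVal_le_val_modByMonic μ.map_zero hφ hd g)).trans (μ.map_add _ _)
    · calc min (augVal μ φ γ f) (augVal μ φ γ g)
          ≤ min (augVal μ φ γ (f /ₘ φ) + γ) (augVal μ φ γ (g /ₘ φ) + γ) :=
            min_le_min (augVal_le_augVal_divByMonic_add μ.map_zero hφ hd f)
              (augVal_le_augVal_divByMonic_add μ.map_zero hφ hd g)
        _ = min (augVal μ φ γ (f /ₘ φ)) (augVal μ φ γ (g /ₘ φ)) + γ :=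
            min_add_add_right _ _ _
        _ ≤ augVal μ φ γ (f /ₘ φ + g /ₘ φ) + γ := add_le_add_left (ih _) γ

theorem val_le_augVal (hφ : IsMuMinimal μ φ) (hm : φ.Monic) (hγ : μ φ ≤ γ) (f : K[X]) :
    μ f ≤ augVal μ φ γ f := by
  induction f using induction_divByMonic (natDegree_pos_iff_degree_pos.1 hφ.1) with
  | zero => simp [augVal_zero μ.map_zero]
  | step f _ ih =>
    rw [hφ.val_eq_min hm, augVal_eq_min μ.map_zero hm hφ.1, μ.map_mul, add_comm]
    exact min_le_min le_rfl (add_le_add ih hγ)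

theorem augVal_mul_of_degree_lt (hφ : IsKeyPol μ φ) (hγ : μ φ ≤ γ) {a b : K[X]}
    (ha : a.degree < φ.degree) (hb : b.degree < φ.degree) :
    augVal μ φ γ (a * b) = μ a + μ b := by
  rw [augVal_eq_min μ.map_zero hφ.monic hφ.natDegree_pos, hφ.val_mul_modByMonic ha hb,
    min_eq_left]
  calc μ a + μ b = μ (a * b) := (μ.map_mul a b).symm
    _ ≤ μ (φ * ((a * b) /ₘ φ)) :=
      (hφ.isMuMinimal.val_eq_min hφ.monic (a * b)).trans_le (min_le_right _ _)
    _ = μ ((a * b) /ₘ φ) + μ φ := by rw [μ.map_mul, add_comm]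
    _ ≤ augVal μ φ γ ((a * b) /ₘ φ) + γ :=
      add_le_add (val_le_augVal hφ.isMuMinimal hφ.monic hγ _) hγ

theorem val_add_augVal_le_augVal_mul (hφ : IsKeyPol μ φ) (hγ : μ φ ≤ γ) {r : K[X]}
    (hr : r.degree < φ.degree) (g : K[X]) :
    μ r + augVal μ φ γ g ≤ augVal μ φ γ (r * g) := by
  induction g using induction_divByMonic hφ.degree_pos with
  | zero => simp [augVal_zero μ.map_zero]
  | step g _ ih =>
    have hsplit : r * g = r * (g %ₘ φ) + φ * (r * (g /ₘ φ)) := by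
      linear_combination -r * modByMonic_add_div g φ
    rw [augVal_eq_min μ.map_zero hφ.monic hφ.natDegree_pos g, ← min_add_add_left, hsplit]
    refine le_trans ?_ (augVal_add hφ.monic hφ.natDegree_pos _ _)
    rw [augVal_mul_of_degree_lt hφ hγ hr (degree_modByMonic_lt g hφ.monic),
      augVal_mul_left μ.map_zero hφ.monic hφ.natDegree_pos, ← add_assoc]
    exact min_le_min le_rfl (add_le_add_left ih γ)

theorem augVal_add_augVal_le_augVal_mul (hφ : IsKeyPol μ φ) (hγ : μ φ ≤ γ) (f g : K[X]) :
    augVal μ φ γ f + augVal μ φ γ g ≤ augVal μ φ γ (f * g) := by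
  induction f using induction_divByMonic hφ.degree_pos with
  | zero => simp [augVal_zero μ.map_zero]
  | step f _ ih =>
    have hsplit : f * g = (f %ₘ φ) * g + φ * ((f /ₘ φ) * g) := by
      linear_combination -g * modByMonic_add_div f φ
    rw [augVal_eq_min μ.map_zero hφ.monic hφ.natDegree_pos f, ← min_add_add_right, hsplit]
    refine le_trans ?_ (augVal_add hφ.monic hφ.natDegree_pos _ _)
    rw [augVal_mul_left μ.map_zero hφ.monic hφ.natDegree_pos, add_right_comm]
    exact min_le_min (val_add_augVal_le_augVal_mul hφ hγ (degree_modByMonic_lt f hφ.monic) g)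
      (add_le_add_left ih γ)

theorem augVal_one (hφ : IsKeyPol μ φ) : augVal μ φ γ 1 = 0 := by
  rw [augVal_of_degree_lt μ.map_zero hφ.monic hφ.natDegree_pos
    (degree_one.trans_lt hφ.degree_pos), μ.map_one]

theorem augVal_le_augVal_neg (hφ : IsKeyPol μ φ) (hγ : μ φ ≤ γ) (f : K[X]) :
    augVal μ φ γ f ≤ augVal μ φ γ (-f) := by
  have h := augVal_add_augVal_le_augVal_mul hφ hγ (-1) f
  rwa [augVal_of_degree_lt μ.map_zero hφ.monic hφ.natDegree_pos
    ((degree_neg (1 : K[X])).trans_lt (degree_one.trans_lt hφ.degree_pos)), μ.map_neg,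
    μ.map_one, zero_add, neg_one_mul] at h

theorem augVal_mul_le_of_lt (hφ : IsKeyPol μ φ) (hγ : μ φ ≤ γ) {f g : K[X]}
    (hf : augVal μ φ γ f < μ (f %ₘ φ)) (hg : augVal μ φ γ g ≠ ⊤)
    (ih : augVal μ φ γ ((f /ₘ φ) * g) ≤ augVal μ φ γ (f /ₘ φ) + augVal μ φ γ g) :
    augVal μ φ γ (f * g) ≤ augVal μ φ γ f + augVal μ φ γ g := by
  have hrec := augVal_eq_min μ.map_zero hφ.monic hφ.natDegree_pos (γ := γ) f
  have hfq : augVal μ φ γ f = augVal μ φ γ (f /ₘ φ) + γ := by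
    rw [hrec] at hf ⊢
    exact min_eq_right ((min_lt_iff.1 hf).resolve_left (lt_irrefl _)).le
  set X := (f %ₘ φ) * g
  set Y := φ * ((f /ₘ φ) * g)
  have hY : augVal μ φ γ Y ≤ augVal μ φ γ f + augVal μ φ γ g := by
    rw [augVal_mul_left μ.map_zero hφ.monic hφ.natDegree_pos, hfq, add_right_comm]
    exact add_le_add_left ih γ
  have hX : augVal μ φ γ f + augVal μ φ γ g < augVal μ φ γ X :=
    (WithTop.add_lt_add_right hg hf).trans_le
      (val_add_augVal_le_augVal_mul hφ hγ (degree_modByMonic_lt f hφ.monic) g)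
  rw [show f * g = X + Y by linear_combination -g * modByMonic_add_div f φ]
  by_contra! hXY
  have h := augVal_add (μ := μ) (γ := γ) hφ.monic hφ.natDegree_pos (X + Y) (-X)
  rw [add_neg_cancel_comm] at h
  exact (lt_min hXY (hX.trans_le (augVal_le_augVal_neg hφ hγ X))).not_ge (h.trans hY)

theorem augVal_mul_le_of_eq (hφ : IsKeyPol μ φ) (hγ : μ φ ≤ γ) {f : K[X]}
    (hf : augVal μ φ γ f = μ (f %ₘ φ)) (g : K[X]) :
    augVal μ φ γ (f * g) ≤ augVal μ φ γ f + augVal μ φ γ g := by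
  induction g using induction_divByMonic hφ.degree_pos with
  | zero => simp [augVal_zero μ.map_zero]
  | step g _ ih =>
    rcases eq_or_ne (augVal μ φ γ f) ⊤ with hf_top | hf_top
    · simp [hf_top]
    rcases (augVal_le_val_modByMonic μ.map_zero hφ.monic hφ.natDegree_pos g).lt_or_eq
      with hlt | heq
    · rw [mul_comm, add_comm]
      exact augVal_mul_le_of_lt hφ hγ hlt hf_top (by rwa [mul_comm, add_comm])
    · calc augVal μ φ γ (f * g) ≤ μ ((f * g) %ₘ φ) :=
            augVal_le_val_modByMonic μ.map_zero hφ.monic hφ.natDegree_pos _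
        _ = μ (f %ₘ φ) + μ (g %ₘ φ) := by
          rw [mul_modByMonic, hφ.val_mul_modByMonic (degree_modByMonic_lt f hφ.monic)
            (degree_modByMonic_lt g hφ.monic)]
        _ = augVal μ φ γ f + augVal μ φ γ g := by rw [hf, heq]

theorem augVal_mul (hφ : IsKeyPol μ φ) (hγ : μ φ ≤ γ) (f g : K[X]) :
    augVal μ φ γ (f * g) = augVal μ φ γ f + augVal μ φ γ g := by
  refine le_antisymm ?_ (augVal_add_augVal_le_augVal_mul hφ hγ f g)
  induction f using induction_divByMonic hφ.degree_pos with
  | zero => simp [augVal_zero μ.map_zero]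
  | step f _ ih =>
    rcases eq_or_ne (augVal μ φ γ g) ⊤ with hg | hg
    · simp [hg]
    rcases (augVal_le_val_modByMonic μ.map_zero hφ.monic hφ.natDegree_pos f).lt_or_eq
      with hlt | heq
    · exact augVal_mul_le_of_lt hφ hγ hlt hg ih
    · exact augVal_mul_le_of_eq hφ hγ heq g

noncomputable def augValuation (hφ : IsKeyPol μ φ) (hγ : μ φ ≤ γ) :
    AddValuation K[X] (WithTop Λ) :=
  AddValuation.of (augVal μ φ γ) (augVal_zero μ.map_zero) (augVal_one hφ)
    (augVal_add hφ.monic hφ.natDegree_pos) (augVal_mul hφ hγ)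

@[simp]
theorem coe_augValuation (hφ : IsKeyPol μ φ) (hγ : μ φ ≤ γ) :
    ⇑(augValuation hφ hγ) = augVal μ φ γ :=
  rfl

end Augmentation

section Properties

variable {μ : AddValuation K[X] (WithTop Λ)} {φ : K[X]} {γ : WithTop Λ}

theorem augVal_self (hφ : IsKeyPol μ φ) : augVal μ φ γ φ = γ := by
  simpa [augVal_one hφ] using augVal_mul_left μ.map_zero hφ.monic hφ.natDegree_pos (γ := γ) 1

theorem val_lt_augVal (hφ : IsKeyPol μ φ) (hγ : μ φ < γ) : ⇑μ < augVal μ φ γ :=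
  Pi.lt_def.2 ⟨val_le_augVal hφ.isMuMinimal hφ.monic hγ.le, φ, by rwa [augVal_self hφ]⟩

theorem natDegree_le_of_val_lt_augVal (hφ : IsKeyPol μ φ) {f : K[X]}
    (hf : μ f < augVal μ φ γ f) : φ.natDegree ≤ f.natDegree := by
  by_contra! hlt
  rw [augVal_of_degree_lt μ.map_zero hφ.monic hφ.natDegree_pos (degree_lt_degree hlt)] at hf
  exact lt_irrefl _ hf

theorem val_of_natDegree_eq (hφ : IsKeyPol μ φ) {ψ : K[X]} (hψ : ψ.Monic)
    (hdeg : ψ.natDegree = φ.natDegree) : μ ψ = min (μ (ψ - φ)) (μ φ) := by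
  simpa using hφ.isMuMinimal.val_add_mul (degree_sub_lt_of_natDegree_eq hψ hφ.monic hdeg) 1

theorem augVal_of_natDegree_eq (hφ : IsKeyPol μ φ) {ψ : K[X]} (hψ : ψ.Monic)
    (hdeg : ψ.natDegree = φ.natDegree) : augVal μ φ γ ψ = min (μ (ψ - φ)) γ := by
  obtain ⟨hq, hr⟩ := div_modByMonic_unique 1 (ψ - φ) hφ.monic
    ⟨by ring, degree_sub_lt_of_natDegree_eq hψ hφ.monic hdeg⟩
  rw [augVal_eq_min μ.map_zero hφ.monic hφ.natDegree_pos, hq, hr, augVal_one hφ, zero_add]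

theorem tangentDir_augVal (hφ : IsKeyPol μ φ) (hγ : μ φ < γ) :
    TangentDir μ (augVal μ φ γ) = KeyPolClass μ φ := by
  ext ψ
  constructor
  · rintro ⟨hψ, hlt, hmin⟩
    have hdeg : ψ.natDegree = φ.natDegree :=
      le_antisymm (hmin φ hφ.monic (by rwa [augVal_self hφ]))
        (natDegree_le_of_val_lt_augVal hφ hlt)
    have hμψ := val_of_natDegree_eq hφ hψ hdeg
    have hνψ := augVal_of_natDegree_eq (γ := γ) hφ hψ hdeg
    have hφψ : μ φ < μ (ψ - φ) := by
      by_contra! hle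
      rw [hμψ, hνψ, min_eq_left hle, min_eq_left (hle.trans hγ.le)] at hlt
      exact lt_irrefl _ hlt
    have hψφ : MuEquiv μ ψ φ := by
      rw [MuEquiv, hμψ, min_eq_right hφψ.le]
      exact hφψ
    exact ⟨hφ.of_muEquiv hψ hdeg hψφ, hψφ⟩
  · rintro ⟨hψ, hψφ⟩
    have hdeg : ψ.natDegree = φ.natDegree := natDegree_eq_of_degree_eq <| le_antisymm
      (not_lt.1 fun h =>
        hψ.not_muDvd hφ.monic.ne_zero h ⟨1, by rw [one_mul]; exact hψφ.symm⟩)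
      (not_lt.1 fun h => hφ.not_muDvd hψ.monic.ne_zero h ⟨1, by rw [one_mul]; exact hψφ⟩)
    refine ⟨hψ.monic, ?_, fun χ _ hχ => hdeg ▸ natDegree_le_of_val_lt_augVal hφ hχ⟩
    rw [augVal_of_natDegree_eq hφ hψ.monic hdeg]
    exact lt_min hψφ (hψφ.val_eq ▸ hγ)

theorem valGroup_augVal (hφ : IsKeyPol μ φ) :
    valGroup (augVal μ φ γ) =
      AddSubgroup.closure
        ({δ : Λ | ∃ a : Polynomial K, a.degree < φ.degree ∧ μ a = (δ : WithTop Λ)} ∪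
          {δ : Λ | γ = (δ : WithTop Λ)}) := by
  refine le_antisymm ((AddSubgroup.closure_le _).2 ?_) ((AddSubgroup.closure_le _).2 ?_)
  · rintro δ ⟨f, hf⟩
    obtain ⟨s, hs⟩ := exists_augVal_eq (μ := μ) (γ := γ) f
    obtain ⟨α, β, hα, hβ, rfl⟩ := WithTop.add_eq_coe.1 (hs.symm.trans hf)
    refine add_mem (AddSubgroup.subset_closure
      (Or.inl ⟨_, degree_expCoeff_lt hφ.monic f s, hα.symm⟩)) ?_
    induction γ using WithTop.recTopCoe with
    | top =>
      cases s with
      | zero =>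
        rw [zero_nsmul, WithTop.coe_eq_zero] at hβ
        exact hβ ▸ zero_mem _
      | succ n => simp [succ_nsmul] at hβ
    | coe c =>
      have hβc : β = s • c := by exact_mod_cast hβ
      rw [hβc]
      refine nsmul_mem ?_ s
      exact AddSubgroup.subset_closure (Set.mem_union_right _ rfl)
  · rintro δ (⟨a, ha, hδ⟩ | hδ)
    · exact AddSubgroup.subset_closure
        ⟨a, (augVal_of_degree_lt μ.map_zero hφ.monic hφ.natDegree_pos ha).trans hδ⟩
    · exact AddSubgroup.subset_closure ⟨φ, (augVal_self hφ).trans hδ⟩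

theorem augVal_eq_top_iff (hφ : IsKeyPol μ φ) (f : K[X]) :
    augVal μ φ ⊤ f = ⊤ ↔ φ ∣ f := by
  rw [augVal_eq_min μ.map_zero hφ.monic hφ.natDegree_pos, add_top, min_top_right,
    ← modByMonic_eq_zero_iff_dvd hφ.monic]
  exact ⟨not_imp_not.1 hφ.val_ne_top_of_ne_zero, fun h => by rw [h, μ.map_zero]⟩

theorem muDvd_augVal_iff (hφ : IsKeyPol μ φ) (g : K[X]) :
    MuDvd (augVal μ φ γ) φ g ↔ augVal μ φ γ g < μ (g %ₘ φ) := by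
  constructor
  · rintro ⟨w, hw⟩
    refine hw.trans_le ?_
    have h :=
      augVal_le_val_modByMonic μ.map_zero hφ.monic hφ.natDegree_pos (γ := γ) (g - w * φ)
    rwa [sub_modByMonic, (modByMonic_eq_zero_iff_dvd hφ.monic).2 (dvd_mul_left φ w),
      sub_zero] at h
  · intro hlt
    refine ⟨g /ₘ φ, ?_⟩
    rw [MuEquiv, show g - g /ₘ φ * φ = g %ₘ φ by linear_combination -modByMonic_add_div g φ,
      augVal_of_degree_lt μ.map_zero hφ.monic hφ.natDegree_pos
        (degree_modByMonic_lt g hφ.monic)]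
    exact hlt

theorem isMuMinimal_augVal (hφ : IsKeyPol μ φ) : IsMuMinimal (augVal μ φ γ) φ := by
  refine ⟨hφ.natDegree_pos, fun f _ hdeg hdvd => ?_⟩
  rw [muDvd_augVal_iff hφ, (modByMonic_eq_self_iff hφ.monic).2 hdeg,
    augVal_of_degree_lt μ.map_zero hφ.monic hφ.natDegree_pos hdeg] at hdvd
  exact lt_irrefl _ hdvd

theorem isMuIrreducible_augVal (hφ : IsKeyPol μ φ) (hγ : μ φ ≤ γ) (hγ_top : γ ≠ ⊤) :
    IsMuIrreducible (augVal μ φ γ) φ := by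
  refine ⟨by rwa [augVal_self hφ], fun ⟨f, hf⟩ => ?_, fun f g hfg => ?_⟩
  · have hf' : MuEquiv (augValuation hφ hγ) (f * φ) 1 := hf
    exact (isMuMinimal_augVal hφ).2 1 one_ne_zero (degree_one.trans_lt hφ.degree_pos)
      ⟨f, hf'.symm⟩
  · by_contra! h
    simp only [muDvd_augVal_iff hφ, not_lt] at hfg h
    have hf := le_antisymm (augVal_le_val_modByMonic μ.map_zero hφ.monic hφ.natDegree_pos f) h.1
    have hg := le_antisymm (augVal_le_val_modByMonic μ.map_zero hφ.monic hφ.natDegree_pos g) h.2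
    rw [mul_modByMonic, hφ.val_mul_modByMonic (degree_modByMonic_lt f hφ.monic)
      (degree_modByMonic_lt g hφ.monic), ← hf, ← hg, ← augVal_mul hφ hγ] at hfg
    exact lt_irrefl _ hfg

theorem isKeyPol_augVal (hφ : IsKeyPol μ φ) (hγ : μ φ ≤ γ) (hγ_top : γ ≠ ⊤) :
    IsKeyPol (augVal μ φ γ) φ :=
  ⟨hφ.monic, isMuMinimal_augVal hφ, isMuIrreducible_augVal hφ hγ hγ_top⟩

/-- A key polynomial `ψ` for `ν` of smaller degree would give
`ν φ = min (ν r) (ν (ψ q)) ≤ μ φ` for `φ = r + ψ q`, because `ν = μ` below `deg φ`. -/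
theorem natDegree_le_of_isKeyPol_augVal (hφ : IsKeyPol μ φ) (hγ : μ φ < γ) {ψ : K[X]}
    (hψ : IsKeyPol (augVal μ φ γ) ψ) : φ.natDegree ≤ ψ.natDegree := by
  by_contra! hlt
  have hψ' : IsKeyPol (augValuation hφ hγ.le) ψ := hψ
  have hr : (φ %ₘ ψ).degree < φ.degree :=
    (degree_modByMonic_lt φ hψ'.monic).trans (degree_lt_degree hlt)
  have hq : (φ /ₘ ψ).degree < φ.degree :=
    degree_divByMonic_lt φ ψ hφ.monic.ne_zero hψ'.degree_pos
  have hval := hψ'.isMuMinimal.val_eq_min hψ'.monic φ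
  have hsmall : ∀ f : K[X], f.degree < φ.degree → augVal μ φ γ f = μ f :=
    fun _ => augVal_of_degree_lt μ.map_zero hφ.monic hφ.natDegree_pos
  rw [coe_augValuation, augVal_self hφ, augVal_mul hφ hγ.le, hsmall _ hr, hsmall _ hq,
    hsmall _ (degree_lt_degree hlt), ← μ.map_mul] at hval
  have hle := μ.map_add (φ %ₘ ψ) (ψ * (φ /ₘ ψ))
  rw [modByMonic_add_div, ← hval] at hle
  exact hγ.not_ge hle

theorem isMinKeyPol_augVal (hφ : IsKeyPol μ φ) (hγ : μ φ < γ) (hγ_top : γ ≠ ⊤) :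
    IsMinKeyPol (augVal μ φ γ) φ :=
  ⟨isKeyPol_augVal hφ hγ.le hγ_top, fun _ hψ => natDegree_le_of_isKeyPol_augVal hφ hγ hψ⟩

theorem degOf_augVal (hφ : IsKeyPol μ φ) (hγ : μ φ < γ) (hγ_top : γ ≠ ⊤) :
    degOf (augVal μ φ γ) = φ.natDegree :=
  le_antisymm (Nat.sInf_le ⟨φ, isKeyPol_augVal hφ hγ.le hγ_top, rfl⟩)
    (le_csInf ⟨_, φ, isKeyPol_augVal hφ hγ.le hγ_top, rfl⟩ fun _ ⟨_, hψ, hn⟩ =>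
      hn ▸ natDegree_le_of_isKeyPol_augVal hφ hγ hψ)

theorem isValT_augVal {v : FieldVal K Λ} (hμ : IsValT v μ) (hφ : IsKeyPol μ φ)
    (hγ : μ φ ≤ γ) : IsValT v (augVal μ φ γ) :=
  ⟨augVal_one hφ, augVal_zero μ.map_zero, augVal_mul hφ hγ,
    augVal_add hφ.monic hφ.natDegree_pos,
    fun a => (augVal_of_degree_lt μ.map_zero hφ.monic hφ.natDegree_pos
      (degree_C_le.trans_lt hφ.degree_pos)).trans (hμ.2.2.2.2 a)⟩

end Properties

end MLV

open MLV

theorem statement_3_general {K : Type*} [Field K] {Λ : Type*} [AddCommGroup Λ] [LinearOrder Λ] [IsOrderedAddMonoid Λ]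
    (v : FieldVal K Λ) (μ : Polynomial K → WithTop Λ) (hμ : IsValT v μ)
    (φ : Polynomial K) (hφ : IsKeyPol μ φ)
    (γ : WithTop Λ) (hγ : μ φ < γ) :
    IsValT v (augVal μ φ γ) ∧ μ < augVal μ φ γ ∧ augVal μ φ γ φ = γ ∧
      TangentDir μ (augVal μ φ γ) = KeyPolClass μ φ ∧
      valGroup (augVal μ φ γ) =
        AddSubgroup.closure
          ({δ : Λ | ∃ a : Polynomial K, a.degree < φ.degree ∧ μ a = (δ : WithTop Λ)} ∪
            {δ : Λ | γ = (δ : WithTop Λ)}) ∧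
      (γ = ⊤ → ∀ f : Polynomial K, (augVal μ φ γ f = ⊤ ↔ φ ∣ f)) ∧
      (γ ≠ ⊤ → IsMinKeyPol (augVal μ φ γ) φ ∧ degOf (augVal μ φ γ) = φ.natDegree) := by
  obtain ⟨μ, rfl⟩ : ∃ μ' : AddValuation K[X] (WithTop Λ), ⇑μ' = μ :=
    ⟨AddValuation.of μ hμ.2.1 hμ.1 hμ.2.2.2.1 hμ.2.2.1, rfl⟩
  refine ⟨isValT_augVal hμ hφ hγ.le, val_lt_augVal hφ hγ, augVal_self hφ,
    tangentDir_augVal hφ hγ, valGroup_augVal hφ, ?_,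
    fun hγ_top => ⟨isMinKeyPol_augVal hφ hγ hγ_top, degOf_augVal hφ hγ hγ_top⟩⟩
  rintro rfl
  exact augVal_eq_top_iff hφ

/-- Properties of the augmented valuation `ν = [μ; φ, γ]`. -/
theorem statement_3 {K : Type*} [Field K] {Λ : Type*} [AddCommGroup Λ] [LinearOrder Λ] [IsOrderedAddMonoid Λ]
    (v : FieldVal K Λ) (μ : Polynomial K → WithTop Λ) (hμ : IsValT v μ)
    (hin : IsInnerNode μ) (φ : Polynomial K) (hφ : IsKeyPol μ φ)
    (γ : WithTop Λ) (hγ : μ φ < γ) :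
    IsValT v (augVal μ φ γ) ∧ μ < augVal μ φ γ ∧ augVal μ φ γ φ = γ ∧
      TangentDir μ (augVal μ φ γ) = KeyPolClass μ φ ∧
      valGroup (augVal μ φ γ) =
        AddSubgroup.closure
          ({δ : Λ | ∃ a : Polynomial K, a.degree < φ.degree ∧ μ a = (δ : WithTop Λ)} ∪
            {δ : Λ | γ = (δ : WithTop Λ)}) ∧
      (γ = ⊤ → ∀ f : Polynomial K, (augVal μ φ γ f = ⊤ ↔ φ ∣ f)) ∧
      (γ ≠ ⊤ → IsMinKeyPol (augVal μ φ γ) φ ∧ degOf (augVal μ φ γ) = φ.natDegree) :=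
  statement_3_general v μ hμ φ hφ γ hγ
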